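/- arXiv:1602.08162 — 3 statements merged into one kernel-verified Lean document; each statement's English description precedes it below -/
import Mathlib

section
/- In a bipartite graph, the maximum size of a matching equals the minimum size of a vertex cover (König's theorem). -/
/-!
Each edge of a matching needs its own vertex of a vertex cover, so matchings are never larger
than covers. Conversely, let `C` be a minimum vertex cover. If `S ⊆ C` is independent, then
`(C \ S) ∪ (N(S) \ C)` is again a cover, so by minimality `S` has at least `#S` neighbours
outside `C`. In a bipartite graph every `S ⊆ C` splits into two independent colour classes whose
neighbourhoods outside `C` are disjoint, so Hall's condition holds for the neighbourhoods
`N(a) \ C`, `a ∈ C`. Hall's theorem then gives an injection `f : C → V \ C` along edges, and the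
edges `s(a, f a)` form a matching of size `#C`.
-/

open Finset SimpleGraph

namespace SimpleGraph

variable {V : Type*} {G : SimpleGraph V}

theorem isVertexCover_iff_forall_mem_edgeSet {s : Set V} :
    G.IsVertexCover s ↔ ∀ e ∈ G.edgeSet, ∃ v ∈ s, v ∈ e := by
  refine ⟨fun h e he => ?_, fun h u v huv => ?_⟩
  · induction e using Sym2.ind with
    | _ u v =>
      rcases h he with hu | hv
      exacts [⟨u, hu, Sym2.mem_mk_left u v⟩, ⟨v, hv, Sym2.mem_mk_right u v⟩]
  · obtain ⟨w, hw, hwe⟩ := h s(u, v) huv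
    rcases Sym2.mem_iff.1 hwe with rfl | rfl
    exacts [Or.inl hw, Or.inr hw]

theorem card_le_card_of_isVertexCover {M : Finset (Sym2 V)} (hM : ↑M ⊆ G.edgeSet)
    (hpair : (M : Set (Sym2 V)).Pairwise fun e f => ∀ v : V, v ∈ e → v ∉ f)
    {S : Finset V} (hS : G.IsVertexCover ↑S) : #M ≤ #S := by
  refine card_le_card_of_forall_subsingleton (fun e v => v ∈ e)
    (fun e he => isVertexCover_iff_forall_mem_edgeSet.1 hS e (hM he))
    fun v _ e ⟨he, hve⟩ e' ⟨he', hve'⟩ => ?_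
  by_contra hne
  exact hpair he he' hne v hve hve'

theorem exists_matching_card_eq_of_injective [DecidableEq V] {C : Finset V} (f : C → V)
    (hf : Function.Injective f) (hadj : ∀ a : C, G.Adj a (f a)) (hout : ∀ a, f a ∉ C) :
    ∃ M : Finset (Sym2 V), ↑M ⊆ G.edgeSet ∧
      ((M : Set (Sym2 V)).Pairwise fun e f => ∀ v : V, v ∈ e → v ∉ f) ∧ #M = #C := by
  have hedge : Function.Injective fun a : C => s(a.1, f a) := by
    intro a a' h
    rcases Sym2.eq_iff.1 h with ⟨h, -⟩ | ⟨h, -⟩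
    · exact Subtype.ext h
    · exact absurd (h ▸ a.2) (hout a')
  refine ⟨univ.image fun a : C => s(a.1, f a), ?_, ?_, ?_⟩
  · simpa [Set.range_subset_iff] using hadj
  · simp only [coe_image, coe_univ, Set.image_univ]
    rintro _ ⟨a, rfl⟩ _ ⟨a', rfl⟩ hne v hv hv'
    have ha : a ≠ a' := fun h => hne (h ▸ rfl)
    simp only [Sym2.mem_iff] at hv hv'
    rcases hv with rfl | rfl <;> rcases hv' with h | h
    exacts [ha (Subtype.ext h), hout a' (h ▸ a.2), hout a (h ▸ a'.2), hf.ne ha h]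
  · rw [card_image_of_injective _ hedge, card_univ, Fintype.card_coe]

section MinimumCover

variable [DecidableEq V] [G.LocallyFinite] {C : Finset V}
  (hC : G.IsVertexCover ↑C) (hmin : ∀ D : Finset V, G.IsVertexCover ↑D → #C ≤ #D)
include hC hmin

theorem card_le_card_biUnion_of_isIndepSet {S : Finset V} (hSC : S ⊆ C)
    (hS : G.IsIndepSet ↑S) : #S ≤ #(S.biUnion fun a => G.neighborFinset a \ C) := by
  set N := S.biUnion fun a => G.neighborFinset a \ C
  have hcover_of_mem : ∀ u v, G.Adj u v → u ∈ C → u ∈ C \ S ∪ N ∨ v ∈ C \ S ∪ N := by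
    intro u v huv hu
    by_cases huS : u ∈ S
    · right
      by_cases hvC : v ∈ C
      · exact mem_union_left _ (mem_sdiff.2 ⟨hvC, fun hvS => hS huS hvS huv.ne huv⟩)
      · exact mem_union_right _
          (mem_biUnion.2 ⟨u, huS, mem_sdiff.2 ⟨(mem_neighborFinset _ _ _).2 huv, hvC⟩⟩)
    · exact Or.inl (mem_union_left _ (mem_sdiff.2 ⟨hu, huS⟩))
  have hcover : G.IsVertexCover ↑(C \ S ∪ N) := fun u v huv =>
    (hC huv).elim (hcover_of_mem u v huv) fun hv => (hcover_of_mem v u huv.symm hv).symm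
  have hcard : #C ≤ #C - #S + #N := calc
    #C ≤ #(C \ S ∪ N) := hmin _ hcover
    _ ≤ #(C \ S) + #N := card_union_le _ _
    _ = #C - #S + #N := by rw [card_sdiff_of_subset hSC]
  have := card_le_card hSC
  omega

theorem card_le_card_biUnion_of_coloring (c : G.Coloring (Fin 2)) {S : Finset V}
    (hSC : S ⊆ C) : #S ≤ #(S.biUnion fun a => G.neighborFinset a \ C) := by
  set S₀ := S.filter (c · = 0)
  set S₁ := S.filter (¬c · = 0)
  have hS₀ : G.IsIndepSet ↑S₀ := fun a ha b hb _ hab => by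
    have := c.valid hab
    simp only [S₀, coe_filter, Set.mem_ofPred_eq] at ha hb
    omega
  have hS₁ : G.IsIndepSet ↑S₁ := fun a ha b hb _ hab => by
    have := c.valid hab
    simp only [S₁, coe_filter, Set.mem_ofPred_eq] at ha hb
    omega
  have hdisj : Disjoint (S₀.biUnion fun a => G.neighborFinset a \ C)
      (S₁.biUnion fun a => G.neighborFinset a \ C) := by
    rw [Finset.disjoint_left]
    intro b hb₀ hb₁
    simp only [S₀, S₁, mem_biUnion, mem_filter, mem_sdiff, mem_neighborFinset] at hb₀ hb₁
    obtain ⟨a₀, ⟨-, ha₀⟩, hab₀, -⟩ := hb₀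
    obtain ⟨a₁, ⟨-, ha₁⟩, hab₁, -⟩ := hb₁
    have := c.valid hab₀
    have := c.valid hab₁
    omega
  calc #S = #S₀ + #S₁ := (card_filter_add_card_filter_not _).symm
    _ ≤ #(S₀.biUnion fun a => G.neighborFinset a \ C) +
        #(S₁.biUnion fun a => G.neighborFinset a \ C) :=
      add_le_add (card_le_card_biUnion_of_isIndepSet hC hmin (filter_subset _ _ |>.trans hSC) hS₀)
        (card_le_card_biUnion_of_isIndepSet hC hmin (filter_subset _ _ |>.trans hSC) hS₁)
    _ = #(S.biUnion fun a => G.neighborFinset a \ C) := by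
      rw [← card_union_of_disjoint hdisj, ← union_biUnion, filter_union_filter_not_eq]

theorem exists_injective_adj_notMem (c : G.Coloring (Fin 2)) :
    ∃ f : C → V, Function.Injective f ∧ ∀ a : C, G.Adj a (f a) ∧ f a ∉ C := by
  obtain ⟨f, hf, hft⟩ := (all_card_le_biUnion_card_iff_exists_injective
    fun a : C => G.neighborFinset a \ C).1 fun s => by
      have := card_le_card_biUnion_of_coloring hC hmin c (S := s.image Subtype.val)
        fun x hx => by obtain ⟨a, -, rfl⟩ := mem_image.1 hx; exact a.2
      rwa [card_image_of_injective _ Subtype.val_injective, image_biUnion] at this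
  exact ⟨f, hf, fun a => by simpa using hft a⟩

theorem exists_matching_card_eq_of_minimal (c : G.Coloring (Fin 2)) :
    ∃ M : Finset (Sym2 V), ↑M ⊆ G.edgeSet ∧
      ((M : Set (Sym2 V)).Pairwise fun e f => ∀ v : V, v ∈ e → v ∉ f) ∧ #M = #C :=
  let ⟨f, hf, hfC⟩ := exists_injective_adj_notMem hC hmin c
  exists_matching_card_eq_of_injective f hf (fun a => (hfC a).1) (fun a => (hfC a).2)

end MinimumCover

end SimpleGraph

theorem konig_matching_vertexCover_general {V : Type*} [Fintype V]
    (G : SimpleGraph V) (hbip : G.Colorable 2) :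
    sSup {n : ℕ | ∃ M : Finset (Sym2 V), ↑M ⊆ G.edgeSet ∧
        ((M : Set (Sym2 V)).Pairwise fun e f => ∀ v : V, v ∈ e → v ∉ f) ∧
        M.card = n}
      = sInf {n : ℕ | ∃ S : Finset V, (∀ e ∈ G.edgeSet, ∃ v ∈ S, v ∈ e) ∧
        S.card = n} := by
  classical
  obtain ⟨c⟩ := hbip
  obtain ⟨C, hC, hCcard⟩ := Nat.sInf_mem (s := {n : ℕ | ∃ S : Finset V,
      (∀ e ∈ G.edgeSet, ∃ v ∈ S, v ∈ e) ∧ S.card = n})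
    ⟨_, univ, isVertexCover_iff_forall_mem_edgeSet.1 (by simp), rfl⟩
  replace hC : G.IsVertexCover ↑C := isVertexCover_iff_forall_mem_edgeSet.2 hC
  have hmin : ∀ D : Finset V, G.IsVertexCover ↑D → #C ≤ #D := fun D hD =>
    hCcard ▸ Nat.sInf_le ⟨D, isVertexCover_iff_forall_mem_edgeSet.1 hD, rfl⟩
  rw [← hCcard]
  obtain ⟨M, hM, hpair, hMC⟩ := exists_matching_card_eq_of_minimal hC hmin c
  refine IsGreatest.csSup_eq ⟨⟨M, hM, hpair, hMC⟩, ?_⟩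
  rintro n ⟨M', hM', hpair', rfl⟩
  exact card_le_card_of_isVertexCover hM' hpair' hC

/-- König's theorem: in a finite bipartite graph, the maximum size of a matching
equals the minimum size of a vertex cover. -/
theorem konig_matching_vertexCover {V : Type*} [Fintype V] [DecidableEq V]
    (G : SimpleGraph V) (hbip : G.Colorable 2) :
    sSup {n : ℕ | ∃ M : Finset (Sym2 V), ↑M ⊆ G.edgeSet ∧
        ((M : Set (Sym2 V)).Pairwise fun e f => ∀ v : V, v ∈ e → v ∉ f) ∧
        M.card = n}
      = sInf {n : ℕ | ∃ S : Finset V, (∀ e ∈ G.edgeSet, ∃ v ∈ S, v ∈ e) ∧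
        S.card = n} :=
  konig_matching_vertexCover_general G hbip
end

section
/- For any weighted bipartite graph, the maximum weight of a matching equals the minimum of ∑ y_v over all nonnegative vertex weight assignments y satisfying y_i + y_j ≥ w_{ij} for every edge (i,j) (LP duality for bipartite weighted matching, with integral optima when weights are integral). -/
/-!
Weak duality: each edge of a matching weighs at most the sum of the dual values of its two
endpoints, and distinct edges of a matching have distinct endpoints.

For the converse take a dual `y` of least total. If a set `S` of vertices of one colour class, all
with `y v > 0`, had fewer than `#S` neighbours `N` along tight edges (`w s(i, j) = y i + y j`), then
lowering `y` by one on `S` and raising it by one on `N` would keep it feasible and decrease its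
total. By Hall's theorem the positive vertices of each colour class therefore inject into the other
class along tight edges, and the fixed point behind the Schröder–Bernstein theorem merges the two
injections into one matching of tight edges covering every vertex with `y v > 0`
(Mendelsohn–Dulmage). The weight of that matching is `∑ v, y v`.
-/

open Finset

-- Banach's decomposition lemma.
theorem exists_eq_diff_image_eq_diff_image {α β : Type*} (X : Set α) (Y : Set β)
    (f : α → β) (g : β → α) :
    ∃ (X' : Set α) (Y' : Set β), X' = X \ g '' Y' ∧ Y' = Y \ f '' X' := by
  let Φ : Set α →o Set α := ⟨fun S => X \ g '' (Y \ f '' S), fun S T h => by dsimp; gcongr⟩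
  exact ⟨Φ.lfp, _, Φ.map_lfp.symm, rfl⟩

def shiftDual {V : Type*} [DecidableEq V] (y : V → ℕ) (S N : Finset V) (v : V) : ℕ :=
  if v ∈ S then y v - 1 else if v ∈ N then y v + 1 else y v

theorem sum_shiftDual_add_card {V : Type*} [Fintype V] [DecidableEq V] {y : V → ℕ}
    {S N : Finset V} (hSN : Disjoint S N) (hpos : ∀ v ∈ S, 0 < y v) :
    ∑ v, shiftDual y S N v + #S = ∑ v, y v + #N := by
  have hpoint : ∀ v, shiftDual y S N v + (if v ∈ S then 1 else 0)
      = y v + (if v ∈ N then 1 else 0) := by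
    intro v
    by_cases hvS : v ∈ S
    · have := hpos v hvS
      simp only [shiftDual, hvS, disjoint_left.1 hSN hvS, if_true, if_false]
      omega
    · by_cases hvN : v ∈ N <;> simp [shiftDual, hvS, hvN]
  simpa [sum_add_distrib, sum_ite_mem] using sum_congr (s₁ := univ) rfl fun v _ => hpoint v

namespace SimpleGraph

variable {V : Type*}

def IsDualFeasible (G : SimpleGraph V) (w : Sym2 V → ℕ) (y : V → ℕ) : Prop :=
  ∀ i j, G.Adj i j → w s(i, j) ≤ y i + y j

def tightGraph (G : SimpleGraph V) (w : Sym2 V → ℕ) (y : V → ℕ) : SimpleGraph V where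
  Adj i j := G.Adj i j ∧ w s(i, j) = y i + y j
  symm := ⟨fun _ _ h => ⟨h.1.symm, by rw [Sym2.eq_swap, h.2, add_comm]⟩⟩
  loopless := ⟨fun _ h => h.1.ne rfl⟩

def IsEdgeMatching (G : SimpleGraph V) (M : Finset (Sym2 V)) : Prop :=
  ↑M ⊆ G.edgeSet ∧ (M : Set (Sym2 V)).Pairwise fun e f => ∀ v : V, v ∈ e → v ∉ f

variable {G H : SimpleGraph V} {w : Sym2 V → ℕ} {y : V → ℕ}

@[simp]
theorem tightGraph_adj {i j : V} :
    (G.tightGraph w y).Adj i j ↔ G.Adj i j ∧ w s(i, j) = y i + y j :=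
  Iff.rfl

theorem tightGraph_le : G.tightGraph w y ≤ G := fun _ _ h => (tightGraph_adj.1 h).1

theorem IsEdgeMatching.mono {M : Finset (Sym2 V)} (hM : H.IsEdgeMatching M) (hHG : H ≤ G) :
    G.IsEdgeMatching M :=
  ⟨hM.1.trans (edgeSet_mono hHG), hM.2⟩

section

variable [DecidableEq V]

theorem IsEdgeMatching.sum_sum_toFinset {β : Type*} [AddCommMonoid β] {M : Finset (Sym2 V)}
    (hM : G.IsEdgeMatching M) (y : V → β) :
    ∑ e ∈ M, ∑ v ∈ e.toFinset, y v = ∑ v ∈ M.biUnion Sym2.toFinset, y v := by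
  refine (sum_biUnion fun e he f hf hef => Finset.disjoint_left.2 fun v hve hvf => ?_).symm
  exact hM.2 he hf hef v (Sym2.mem_toFinset.1 hve) (Sym2.mem_toFinset.1 hvf)

theorem IsDualFeasible.le_sum_toFinset (hy : G.IsDualFeasible w y) {e : Sym2 V}
    (he : e ∈ G.edgeSet) : w e ≤ ∑ v ∈ e.toFinset, y v := by
  induction e using Sym2.ind with
  | _ i j =>
    rw [Sym2.toFinset_mk_eq, sum_pair (G.ne_of_adj he)]
    exact hy i j he

theorem eq_sum_toFinset_of_mem_edgeSet_tightGraph {e : Sym2 V}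
    (he : e ∈ (G.tightGraph w y).edgeSet) : w e = ∑ v ∈ e.toFinset, y v := by
  induction e using Sym2.ind with
  | _ i j =>
    rw [Sym2.toFinset_mk_eq, sum_pair (tightGraph_adj.1 he).1.ne]
    exact (tightGraph_adj.1 he).2

theorem IsDualFeasible.sum_le [Fintype V] (hy : G.IsDualFeasible w y) {M : Finset (Sym2 V)}
    (hM : G.IsEdgeMatching M) : ∑ e ∈ M, w e ≤ ∑ v, y v :=
  calc ∑ e ∈ M, w e ≤ ∑ e ∈ M, ∑ v ∈ e.toFinset, y v :=
        sum_le_sum fun _ he => hy.le_sum_toFinset (hM.1 he)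
    _ = ∑ v ∈ M.biUnion Sym2.toFinset, y v := hM.sum_sum_toFinset y
    _ ≤ ∑ v, y v := sum_le_sum_of_subset (subset_univ _)

theorem sum_le_sum_of_isEdgeMatching_tightGraph [Fintype V] {M : Finset (Sym2 V)}
    (hM : (G.tightGraph w y).IsEdgeMatching M)
    (hcover : ∀ v, y v ≠ 0 → v ∈ M.biUnion Sym2.toFinset) : ∑ v, y v ≤ ∑ e ∈ M, w e :=
  calc ∑ v, y v ≤ ∑ v ∈ M.biUnion Sym2.toFinset, y v :=
        sum_le_sum_of_ne_zero fun v _ hv => hcover v hv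
    _ = ∑ e ∈ M, ∑ v ∈ e.toFinset, y v := (hM.sum_sum_toFinset y).symm
    _ = ∑ e ∈ M, w e :=
        sum_congr rfl fun _ he => (eq_sum_toFinset_of_mem_edgeSet_tightGraph (hM.1 he)).symm

theorem IsDualFeasible.isDualFeasible_shiftDual (hy : G.IsDualFeasible w y) {S N : Finset V}
    (hS : G.IsIndepSet ↑S) (hpos : ∀ v ∈ S, 0 < y v)
    (hN : ∀ i ∈ S, ∀ j, (G.tightGraph w y).Adj i j → j ∈ N) :
    G.IsDualFeasible w (shiftDual y S N) := by
  have hle : ∀ v ∉ S, y v ≤ shiftDual y S N v := by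
    intro v hv
    simp only [_root_.shiftDual, if_neg hv]
    split_ifs <;> omega
  have hfrom : ∀ i j, G.Adj i j → i ∈ S → w s(i, j) ≤ shiftDual y S N i + shiftDual y S N j := by
    intro i j hij hi
    have hj : j ∉ S := fun hj => hS hi hj hij.ne hij
    have hi' : shiftDual y S N i = y i - 1 := if_pos hi
    have := hpos i hi
    have := hy i j hij
    by_cases htight : w s(i, j) = y i + y j
    · have hj' : shiftDual y S N j = y j + 1 := by
        simp [_root_.shiftDual, hj, hN i hi j (tightGraph_adj.2 ⟨hij, htight⟩)]
      omega
    · have := hle j hj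
      omega
  intro i j hij
  by_cases hi : i ∈ S
  · exact hfrom i j hij hi
  by_cases hj : j ∈ S
  · rw [Sym2.eq_swap, add_comm]
    exact hfrom j i hij.symm hj
  · have := hy i j hij
    have := hle i hi
    have := hle j hj
    omega

theorem exists_injOn_tightGraph_adj [Fintype V] (hy : G.IsDualFeasible w y)
    (hmin : ∀ y', G.IsDualFeasible w y' → ∑ v, y v ≤ ∑ v, y' v) {A : Set V}
    (hA : G.IsIndepSet A) :
    ∃ f : V → V, Set.InjOn f {a | a ∈ A ∧ 0 < y a} ∧
      ∀ a ∈ A, 0 < y a → (G.tightGraph w y).Adj a (f a) := by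
  classical
  let X := {a | a ∈ A ∧ 0 < y a}
  let T := G.tightGraph w y
  have hall : ∀ s : Finset X, #s ≤ #(s.biUnion fun a => T.neighborFinset a) := by
    intro s
    by_contra! hlt
    set S := s.image Subtype.val
    have hSX : ∀ v ∈ S, v ∈ X := by
      intro v hv
      obtain ⟨a, -, rfl⟩ := mem_image.1 hv
      exact a.2
    have hpos : ∀ v ∈ S, 0 < y v := fun v hv => (hSX v hv).2
    have hSN : Disjoint S (S.biUnion fun a => T.neighborFinset a) := by
      refine Finset.disjoint_left.2 fun v hvS hvN => ?_
      obtain ⟨u, huS, huv⟩ := mem_biUnion.1 hvN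
      have huv : G.Adj u v := ((T.mem_neighborFinset u v).1 huv).1
      exact hA (hSX u huS).1 (hSX v hvS).1 huv.ne huv
    have hshift := hmin _ (hy.isDualFeasible_shiftDual (hA.mono fun v hv => (hSX v hv).1) hpos
      fun i hi j hij => mem_biUnion.2 ⟨i, hi, (T.mem_neighborFinset i j).2 hij⟩)
    have hsum := sum_shiftDual_add_card hSN hpos
    have hcardS : #S = #s := card_image_of_injective _ Subtype.val_injective
    have hcardN : #(S.biUnion fun a => T.neighborFinset a)
        = #(s.biUnion fun a => T.neighborFinset a) := by
      rw [image_biUnion]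
    omega
  obtain ⟨f, hf_inj, hf⟩ := (all_card_le_biUnion_card_iff_exists_injective _).1 hall
  refine ⟨fun v => if h : v ∈ X then f ⟨v, h⟩ else v, ?_, fun a ha hpos => ?_⟩
  · intro a ha b hb hab
    beta_reduce at hab
    rw [dif_pos (show a ∈ X from ha), dif_pos (show b ∈ X from hb)] at hab
    exact congrArg Subtype.val (hf_inj hab)
  · beta_reduce
    rw [dif_pos (show a ∈ X from ⟨ha, hpos⟩)]
    exact (T.mem_neighborFinset _ _).1 (hf ⟨a, ha, hpos⟩)

theorem isEdgeMatching_image_mk {ι : Type*} {D : Finset ι} {p q : ι → V}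
    (hadj : ∀ u ∈ D, H.Adj (p u) (q u)) (hp : Set.InjOn p D) (hq : Set.InjOn q D)
    (hpq : ∀ u ∈ D, ∀ v ∈ D, p u ≠ q v) : H.IsEdgeMatching (D.image fun u => s(p u, q u)) := by
  refine ⟨?_, ?_⟩
  · intro e he
    obtain ⟨u, hu, rfl⟩ := mem_image.1 he
    exact hadj u hu
  · intro e he f hf hef x hxe hxf
    obtain ⟨u, hu, rfl⟩ := mem_image.1 he
    obtain ⟨v, hv, rfl⟩ := mem_image.1 hf
    have huv : u ≠ v := by rintro rfl; exact hef rfl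
    rw [Sym2.mem_iff] at hxe hxf
    rcases hxe with rfl | rfl <;> rcases hxf with h | h
    · exact huv (hp hu hv h)
    · exact hpq u hu v hv h
    · exact hpq v hv u hu h.symm
    · exact huv (hq hu hv h)

theorem mem_biUnion_toFinset_image_mk {ι : Type*} {D : Finset ι} (p q : ι → V) {u : ι}
    (hu : u ∈ D) :
    p u ∈ (D.image fun u => s(p u, q u)).biUnion Sym2.toFinset ∧
      q u ∈ (D.image fun u => s(p u, q u)).biUnion Sym2.toFinset :=
  ⟨mem_biUnion.2 ⟨_, mem_image_of_mem _ hu, Sym2.mem_toFinset.2 (Sym2.mem_mk_left _ _)⟩,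
    mem_biUnion.2 ⟨_, mem_image_of_mem _ hu, Sym2.mem_toFinset.2 (Sym2.mem_mk_right _ _)⟩⟩

theorem exists_isEdgeMatching_cover [Fintype V] {A B X Y : Set V} (hAB : Disjoint A B)
    (hXA : X ⊆ A) (hYB : Y ⊆ B) {f g : V → V} (hf : Set.InjOn f X) (hg : Set.InjOn g Y)
    (hfX : ∀ a ∈ X, H.Adj a (f a) ∧ f a ∈ B) (hgY : ∀ b ∈ Y, H.Adj (g b) b ∧ g b ∈ A) :
    ∃ M : Finset (Sym2 V), H.IsEdgeMatching M ∧ X ∪ Y ⊆ ↑(M.biUnion Sym2.toFinset) := by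
  classical
  obtain ⟨X', Y', hX', hY'⟩ := exists_eq_diff_image_eq_diff_image X Y f g
  have hX'X : X' ⊆ X := hX' ▸ Set.sdiff_subset
  have hY'Y : Y' ⊆ Y := hY' ▸ Set.sdiff_subset
  -- `.inl a` encodes the edge `s(a, f a)` and `.inr b` the edge `s(g b, b)`
  let D : Finset (V ⊕ V) := X'.toFinset.disjSum Y'.toFinset
  let p : V ⊕ V → V := Sum.elim id g
  let q : V ⊕ V → V := Sum.elim f id
  have hpA : ∀ u ∈ D, p u ∈ A := by
    rintro (a | b) hu <;> simp only [D, inl_mem_disjSum, inr_mem_disjSum, Set.mem_toFinset] at hu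
    exacts [hXA (hX'X hu), (hgY b (hY'Y hu)).2]
  have hqB : ∀ u ∈ D, q u ∈ B := by
    rintro (a | b) hu <;> simp only [D, inl_mem_disjSum, inr_mem_disjSum, Set.mem_toFinset] at hu
    exacts [(hfX a (hX'X hu)).2, hYB (hY'Y hu)]
  refine ⟨D.image fun u => s(p u, q u), isEdgeMatching_image_mk ?_ ?_ ?_ ?_, ?_⟩
  · rintro (a | b) hu <;> simp only [D, inl_mem_disjSum, inr_mem_disjSum, Set.mem_toFinset] at hu
    exacts [(hfX a (hX'X hu)).1, (hgY b (hY'Y hu)).1]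
  · rintro (a | b) hu (a' | b') hv h <;>
      simp only [D, mem_coe, inl_mem_disjSum, inr_mem_disjSum, Set.mem_toFinset, p,
        Sum.elim_inl, Sum.elim_inr, id] at hu hv h
    · rw [h]
    · exact ((hX' ▸ hu).2 ⟨b', hv, h.symm⟩).elim
    · exact ((hX' ▸ hv).2 ⟨b, hu, h⟩).elim
    · rw [hg (hY'Y hu) (hY'Y hv) h]
  · rintro (a | b) hu (a' | b') hv h <;>
      simp only [D, mem_coe, inl_mem_disjSum, inr_mem_disjSum, Set.mem_toFinset, q,
        Sum.elim_inl, Sum.elim_inr, id] at hu hv h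
    · rw [hf (hX'X hu) (hX'X hv) h]
    · exact ((hY' ▸ hv).2 ⟨a, hu, h⟩).elim
    · exact ((hY' ▸ hu).2 ⟨a', hv, h.symm⟩).elim
    · rw [h]
  · exact fun u hu v hv h => hAB.notMem_of_mem_left (hpA u hu) (h ▸ hqB v hv)
  · have hmem {u} (hu : u ∈ D) := mem_biUnion_toFinset_image_mk p q hu
    rintro v (hvX | hvY)
    · by_cases hv : v ∈ X'
      · exact (hmem (u := .inl v) (by simpa [D] using hv)).1
      · obtain ⟨b, hb, rfl⟩ : v ∈ g '' Y' := by
          by_contra hvg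
          exact hv (hX' ▸ ⟨hvX, hvg⟩)
        exact (hmem (u := .inr b) (by simpa [D] using hb)).1
    · by_cases hv : v ∈ Y'
      · exact (hmem (u := .inr v) (by simpa [D] using hv)).2
      · obtain ⟨a, ha, rfl⟩ : v ∈ f '' X' := by
          by_contra hvf
          exact hv (hY' ▸ ⟨hvY, hvf⟩)
        exact (hmem (u := .inl a) (by simpa [D] using ha)).2

theorem exists_isEdgeMatching_tightGraph_cover [Fintype V] (hbip : G.Colorable 2)
    (hy : G.IsDualFeasible w y) (hmin : ∀ y', G.IsDualFeasible w y' → ∑ v, y v ≤ ∑ v, y' v) :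
    ∃ M, (G.tightGraph w y).IsEdgeMatching M ∧ ∀ v, y v ≠ 0 → v ∈ M.biUnion Sym2.toFinset := by
  obtain ⟨c⟩ := hbip
  have hdisj : Disjoint (c.colorClass 0) (c.colorClass 1) :=
    Set.disjoint_left.2 fun v (h0 : c v = 0) (h1 : c v = 1) => by omega
  have hcross {i : Fin 2} {a b : V} (ha : c a = i) (hab : G.Adj a b) : c b = i + 1 := by
    have := c.valid hab
    omega
  obtain ⟨f, hf, hfT⟩ := exists_injOn_tightGraph_adj hy hmin (c.isIndepSet_colorClass 0)
  obtain ⟨g, hg, hgT⟩ := exists_injOn_tightGraph_adj hy hmin (c.isIndepSet_colorClass 1)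
  obtain ⟨M, hM, hcover⟩ := exists_isEdgeMatching_cover hdisj (fun _ h => h.1) (fun _ h => h.1)
    hf hg (fun a ⟨ha, hpos⟩ => ⟨hfT a ha hpos, hcross ha (hfT a ha hpos).1⟩)
    (fun b ⟨hb, hpos⟩ => ⟨(hgT b hb hpos).symm, hcross hb (hgT b hb hpos).1⟩)
  refine ⟨M, hM, fun v hv => hcover ?_⟩
  have : c v = 0 ∨ c v = 1 := by omega
  exact this.imp (⟨·, Nat.pos_of_ne_zero hv⟩) (⟨·, Nat.pos_of_ne_zero hv⟩)

theorem exists_isEdgeMatching_sum_le [Fintype V] (hbip : G.Colorable 2)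
    (hy : G.IsDualFeasible w y) (hmin : ∀ y', G.IsDualFeasible w y' → ∑ v, y v ≤ ∑ v, y' v) :
    ∃ M, G.IsEdgeMatching M ∧ ∑ v, y v ≤ ∑ e ∈ M, w e :=
  let ⟨M, hM, hcover⟩ := exists_isEdgeMatching_tightGraph_cover hbip hy hmin
  ⟨M, hM.mono tightGraph_le, sum_le_sum_of_isEdgeMatching_tightGraph hM hcover⟩

end

theorem isDualFeasible_const_sup [Fintype (Sym2 V)] (G : SimpleGraph V) (w : Sym2 V → ℕ) :
    G.IsDualFeasible w fun _ => univ.sup w :=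
  fun _ _ _ => (le_sup (mem_univ _)).trans (Nat.le_add_right _ _)

end SimpleGraph

open SimpleGraph

/-- LP duality for bipartite maximum weight matching with nonnegative integral
weights: the maximum weight of a matching equals the minimum of `∑ y v` over
all nonnegative integral dual feasible vertex weight assignments `y`. -/
theorem bipartite_weighted_matching_duality {V : Type*} [Fintype V] [DecidableEq V]
    (G : SimpleGraph V) (hbip : G.Colorable 2) (w : Sym2 V → ℕ) :
    sSup {k : ℕ | ∃ M : Finset (Sym2 V), ↑M ⊆ G.edgeSet ∧
        ((M : Set (Sym2 V)).Pairwise fun e f => ∀ v : V, v ∈ e → v ∉ f) ∧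
        ∑ e ∈ M, w e = k}
      = sInf {k : ℕ | ∃ y : V → ℕ, (∀ i j : V, G.Adj i j → w s(i, j) ≤ y i + y j) ∧
        ∑ v, y v = k} := by
  obtain ⟨y, hy, hy_inf⟩ := Nat.sInf_mem
    (s := {k | ∃ y : V → ℕ, G.IsDualFeasible w y ∧ ∑ v, y v = k})
    ⟨_, _, isDualFeasible_const_sup G w, rfl⟩
  have hmin : ∀ y', G.IsDualFeasible w y' → ∑ v, y v ≤ ∑ v, y' v :=
    fun y' hy' => hy_inf ▸ Nat.sInf_le ⟨y', hy', rfl⟩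
  obtain ⟨M, hM, hyM⟩ := exists_isEdgeMatching_sum_le hbip hy hmin
  refine (IsGreatest.csSup_eq ?_).trans hy_inf
  refine ⟨⟨M, hM.1, hM.2, le_antisymm (hy.sum_le hM) hyM⟩, ?_⟩
  rintro _ ⟨M', hM'_edges, hM'_disj, rfl⟩
  exact hy.sum_le ⟨hM'_edges, hM'_disj⟩
end

section
/- In a complete weighted graph whose weights satisfy the triangle inequality, for any even subset O of vertices, the minimum weight of a perfect matching on O is at most half the weight of a minimum-cost Hamiltonian cycle on the full vertex set. -/
/-- `M` is a perfect matching on the vertex set `O` in the complete graph: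
a set of pairwise disjoint non-loop edges whose endpoints are exactly `O`. -/
def IsPerfectMatchingOn {V : Type*} (M : Finset (Sym2 V)) (O : Finset V) : Prop :=
  (↑M ⊆ (⊤ : SimpleGraph V).edgeSet) ∧
    ((M : Set (Sym2 V)).Pairwise fun e f => ∀ v : V, v ∈ e → v ∉ f) ∧
    (∀ v : V, v ∈ O ↔ ∃ e ∈ M, v ∈ e)

/-!
Walk once around the Hamiltonian cycle and list the vertices of `O` in the order they are met:
`o₁, …, o₂ₖ`. By the triangle inequality the closed tour `o₁ → o₂ → ⋯ → o₂ₖ → o₁` that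
shortcuts the other vertices is no heavier than the cycle. Its edges alternate between the two
perfect matchings `{o₁o₂, o₃o₄, …}` and `{o₂o₃, …, o₂ₖo₁}` of `O`, so the lighter of the two
weighs at most half of the tour.
-/

open Finset SimpleGraph

section

variable {V : Type*}

def pathWeight (w : Sym2 V → ℝ) : List V → ℝ
  | a :: b :: l => w s(a, b) + pathWeight w (b :: l)
  | _ => 0

def pairUp : List V → List (Sym2 V)
  | a :: b :: l => s(a, b) :: pairUp l
  | _ => []

section Weights

variable {w : Sym2 V → ℝ}

theorem weight_nonneg_of_triangle (htri : ∀ u v x : V, w s(u, v) ≤ w s(u, x) + w s(x, v))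
    (e : Sym2 V) : 0 ≤ w e := by
  induction e using Sym2.ind with
  | _ a b =>
    have hloop := htri a a a
    have hback := htri a a b
    rw [Sym2.eq_swap (a := b)] at hback
    linarith

theorem pathWeight_nonneg (htri : ∀ u v x : V, w s(u, v) ≤ w s(u, x) + w s(x, v)) :
    ∀ l : List V, 0 ≤ pathWeight w l
  | _ :: b :: l => add_nonneg (weight_nonneg_of_triangle htri _) (pathWeight_nonneg htri (b :: l))
  | [] | [_] => le_rfl

theorem pathWeight_cons_le_of_sublist (htri : ∀ u v x : V, w s(u, v) ≤ w s(u, x) + w s(x, v))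
    {s t : List V} (h : s.Sublist t) (a : V) : pathWeight w (a :: s) ≤ pathWeight w (a :: t) := by
  induction h generalizing a with
  | slnil => exact le_rfl
  | @cons s t x _ ih =>
    have hshort := ih x
    cases s with
    | nil =>
      have := pathWeight_nonneg htri (x :: t)
      have := weight_nonneg_of_triangle htri s(a, x)
      simp only [pathWeight] at hshort ⊢
      linarith
    | cons y s =>
      have := htri a y x
      simp only [pathWeight] at hshort ⊢
      linarith
  | cons_cons x _ ih =>
    simp only [pathWeight]
    linarith [ih x]

theorem pathWeight_eq_sum_edges {G : SimpleGraph V} {u v : V} (p : G.Walk u v) :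
    pathWeight w p.support = (p.edges.map w).sum := by
  induction p with
  | nil => rfl
  | cons _ p ih =>
    rw [Walk.support_cons, ← p.cons_tail_support, pathWeight, p.cons_tail_support, ih]
    simp

end Weights

theorem pathWeight_cons_append_singleton (w : Sym2 V → ℝ) :
    ∀ (a z : V) (r : List V), Odd r.length →
      pathWeight w (a :: r ++ [z]) =
        ((pairUp (a :: r)).map w).sum + ((pairUp (r ++ [z])).map w).sum
  | _, _, [], h => by simp at h
  | a, z, [b], _ => by simp [pathWeight, pairUp]
  | a, z, b :: c :: r, h => by
    have ih := pathWeight_cons_append_singleton w c z r (by simpa [Nat.odd_add_one] using h)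
    simp only [List.cons_append, pathWeight, pairUp, List.map_cons, List.sum_cons] at ih ⊢
    linarith

theorem mem_of_mem_pairUp :
    ∀ {l : List V} {e : Sym2 V}, e ∈ pairUp l → ∀ {v : V}, v ∈ e → v ∈ l
  | a :: b :: l, e, he, v, hv => by
    rcases List.mem_cons.1 he with rfl | he
    · rcases Sym2.mem_iff.1 hv with rfl | rfl <;> simp
    · exact List.mem_cons_of_mem _ (List.mem_cons_of_mem _ (mem_of_mem_pairUp he hv))
  | [], _, he, _, _ | [_], _, he, _, _ => by simp [pairUp] at he

theorem exists_mem_pairUp_of_mem :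
    ∀ {l : List V}, Even l.length → ∀ {v : V}, v ∈ l → ∃ e ∈ pairUp l, v ∈ e
  | a :: b :: l, hl, v, hv => by
    rcases List.mem_cons.1 hv with rfl | hv
    · exact ⟨s(v, b), by simp [pairUp], Sym2.mem_mk_left _ _⟩
    rcases List.mem_cons.1 hv with rfl | hv
    · exact ⟨s(a, v), by simp [pairUp], Sym2.mem_mk_right _ _⟩
    obtain ⟨e, he, hve⟩ := exists_mem_pairUp_of_mem (by simpa [Nat.even_add_one] using hl) hv
    exact ⟨e, List.mem_cons_of_mem _ he, hve⟩
  | [], _, _, hv => by simp at hv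
  | [_], hl, _, _ => by simp at hl

theorem pairwise_disjoint_pairUp :
    ∀ {l : List V}, l.Nodup → (pairUp l).Pairwise fun e f => ∀ v ∈ e, v ∉ f
  | a :: b :: l, hl => by
    simp only [List.nodup_cons, List.mem_cons, not_or] at hl
    refine List.Pairwise.cons (fun f hf v hv hvf => ?_) (pairwise_disjoint_pairUp hl.2.2)
    rcases Sym2.mem_iff.1 hv with rfl | rfl
    · exact hl.1.2 (mem_of_mem_pairUp hf hvf)
    · exact hl.2.1 (mem_of_mem_pairUp hf hvf)
  | [], _ | [_], _ => List.Pairwise.nil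

theorem not_isDiag_of_mem_pairUp :
    ∀ {l : List V}, l.Nodup → ∀ {e : Sym2 V}, e ∈ pairUp l → ¬e.IsDiag
  | a :: b :: l, hl, e, he => by
    simp only [List.nodup_cons, List.mem_cons, not_or] at hl
    rcases List.mem_cons.1 he with rfl | he
    · exact Sym2.mk_isDiag_iff.not.2 hl.1.1
    · exact not_isDiag_of_mem_pairUp hl.2.2 he
  | [], _, _, he | [_], _, _, he => by simp [pairUp] at he

theorem nodup_pairUp {l : List V} (hl : l.Nodup) : (pairUp l).Nodup :=
  (pairwise_disjoint_pairUp hl).imp fun {e f} hef heq => by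
    subst heq
    exact hef e.out.1 (Sym2.out_fst_mem e) (Sym2.out_fst_mem e)

theorem isPerfectMatchingOn_pairUp [DecidableEq V] {l : List V} (hl : l.Nodup)
    (hev : Even l.length) : IsPerfectMatchingOn (pairUp l).toFinset l.toFinset := by
  refine ⟨fun e he => ?_, fun e he f hf hef => ?_, fun v => ?_⟩
  · simpa [edgeSet_top] using not_isDiag_of_mem_pairUp hl (List.mem_toFinset.1 he)
  · have : Std.Symm fun e f : Sym2 V => ∀ v ∈ e, v ∉ f := ⟨fun _ _ h v hf he => h v he hf⟩
    rw [List.coe_toFinset] at *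
    exact (pairwise_disjoint_pairUp hl).set_pairwise he hf hef
  · simp only [List.mem_toFinset]
    exact ⟨exists_mem_pairUp_of_mem hev, fun ⟨e, he, hv⟩ => mem_of_mem_pairUp he hv⟩

theorem exists_isPerfectMatchingOn_toFinset_le_half_pathWeight [DecidableEq V]
    (w : Sym2 V → ℝ) {a : V} {r : List V} (hr : (a :: r).Nodup) (hev : Even (a :: r).length) :
    ∃ M : Finset (Sym2 V), IsPerfectMatchingOn M (a :: r).toFinset ∧
      ∑ e ∈ M, w e ≤ 1 / 2 * pathWeight w (a :: r ++ [a]) := by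
  have hperm : (r ++ [a]).Perm (a :: r) := List.perm_append_singleton a r
  have hr' : (r ++ [a]).Nodup := hperm.nodup_iff.2 hr
  have hsum {l : List V} (hl : l.Nodup) :
      ∑ e ∈ (pairUp l).toFinset, w e = ((pairUp l).map w).sum :=
    List.sum_toFinset w (nodup_pairUp hl)
  have hsplit := pathWeight_cons_append_singleton w a a r (by simpa [Nat.even_add_one] using hev)
  rcases le_total ((pairUp (a :: r)).map w).sum ((pairUp (r ++ [a])).map w).sum with hle | hle
  · exact ⟨_, isPerfectMatchingOn_pairUp hr hev, by rw [hsum hr]; linarith⟩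
  · refine ⟨_, ?_, by rw [hsum hr']; linarith⟩
    rw [← List.toFinset_eq_of_perm _ _ hperm]
    exact isPerfectMatchingOn_pairUp hr' (hperm.length_eq ▸ hev)

theorem exists_isPerfectMatchingOn_le_half_pathWeight [DecidableEq V] {w : Sym2 V → ℝ}
    (htri : ∀ u v x : V, w s(u, v) ≤ w s(u, x) + w s(x, v)) {O : Finset V} (hO : Even O.card)
    {a : V} (ha : a ∈ O) {s : List V} (hs : (a :: s).Nodup) (hsO : ∀ x ∈ O, x ∈ a :: s) :
    ∃ M : Finset (Sym2 V), IsPerfectMatchingOn M O ∧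
      ∑ e ∈ M, w e ≤ 1 / 2 * pathWeight w (a :: s ++ [a]) := by
  set r := s.filter (· ∈ O)
  have hr : (a :: r).Nodup := hs.sublist (List.filter_sublist.cons_cons a)
  have hrO : (a :: r).toFinset = O := by
    ext x
    have := hsO x
    by_cases hx : x = a <;> simp_all [r]
  have hev : Even (a :: r).length := by rwa [← List.toFinset_card_of_nodup hr, hrO]
  obtain ⟨M, hM, hMw⟩ := exists_isPerfectMatchingOn_toFinset_le_half_pathWeight w hr hev
  have hshortcut : pathWeight w (a :: r ++ [a]) ≤ pathWeight w (a :: s ++ [a]) :=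
    pathWeight_cons_le_of_sublist htri (List.filter_sublist.append_right [a]) a
  exact ⟨M, hrO ▸ hM, by linarith⟩

theorem SimpleGraph.Walk.IsHamiltonianCycle.exists_isPerfectMatchingOn_le_half [DecidableEq V]
    {G : SimpleGraph V} {a : V} {c : G.Walk a a} (hc : c.IsHamiltonianCycle) {w : Sym2 V → ℝ}
    (htri : ∀ u v x : V, w s(u, v) ≤ w s(u, x) + w s(x, v)) {O : Finset V} (hO : Even O.card)
    (ha : a ∈ O) :
    ∃ M : Finset (Sym2 V), IsPerfectMatchingOn M O ∧
      ∑ e ∈ M, w e ≤ 1 / 2 * (c.edges.map w).sum := by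
  set s := c.dropLast.support.tail
  have hsupp : c.support = a :: s ++ [a] := by
    rw [← c.support_dropLast_concat hc.not_nil, ← c.dropLast.cons_tail_support, List.cons_append]
  have hs : (a :: s).Nodup := by
    have := hc.support_nodup
    rw [hsupp, List.cons_append, List.tail_cons] at this
    exact (List.perm_append_singleton a s).nodup_iff.1 this
  have hall (x : V) : x ∈ a :: s := by
    have := hc.mem_support x
    rw [hsupp] at this
    simp only [List.cons_append, List.mem_cons, List.mem_append] at this ⊢
    tauto
  rw [← pathWeight_eq_sum_edges, hsupp]
  exact exists_isPerfectMatchingOn_le_half_pathWeight htri hO ha hs fun x _ => hall x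

end

theorem min_matching_le_half_tsp_general {V : Type*} [DecidableEq V]
    (w : Sym2 V → ℝ)
    (htri : ∀ u v x : V, w s(u, v) ≤ w s(u, x) + w s(x, v))
    (O : Finset V) (hO : Even O.card)
    (v : V) (c : (⊤ : SimpleGraph V).Walk v v) (hc : c.IsHamiltonianCycle) :
    ∃ M : Finset (Sym2 V), IsPerfectMatchingOn M O ∧
      ∑ e ∈ M, w e ≤ (1 / 2) * (c.edges.map w).sum := by
  obtain rfl | ⟨a, ha⟩ := O.eq_empty_or_nonempty
  · refine ⟨∅, ⟨by simp, by simp, by simp⟩, ?_⟩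
    rw [sum_empty, ← pathWeight_eq_sum_edges]
    linarith [pathWeight_nonneg htri c.support]
  · rw [← ((c.rotate_edges a (hc.mem_support a)).perm.map w).sum_eq]
    exact (hc.rotate _).exists_isPerfectMatchingOn_le_half htri hO ha

/-- In a complete weighted graph whose edge weights satisfy the triangle
inequality, for any even subset `O` of vertices, the minimum weight of a
perfect matching on `O` is at most half the weight of any (in particular, a
minimum-cost) Hamiltonian cycle on the full vertex set. -/
theorem min_matching_le_half_tsp {V : Type*} [Fintype V] [DecidableEq V]
    (w : Sym2 V → ℝ)
    (htri : ∀ u v x : V, w s(u, v) ≤ w s(u, x) + w s(x, v))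
    (O : Finset V) (hO : Even O.card)
    (v : V) (c : (⊤ : SimpleGraph V).Walk v v) (hc : c.IsHamiltonianCycle) :
    ∃ M : Finset (Sym2 V), IsPerfectMatchingOn M O ∧
      ∑ e ∈ M, w e ≤ (1 / 2) * (c.edges.map w).sum :=
  min_matching_le_half_tsp_general w htri O hO v c hc
end
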